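/- arXiv:1903.08591 — 2 statements merged into one kernel-verified Lean document; each statement's English description precedes it below -/
import Mathlib

section
/- Let f be a piecewise contracting interval map, increasing and injective on each contraction piece, with D ⊂ X̃. If x₀ ∈ X̃ is a periodic point, then there exist d⁻ ∈ D⁻ ∪ {d_N} and d⁺ ∈ D⁺ ∪ {d_0} with O(x₀) = ω(d⁻) = ω(d⁺). -/
open Filter Topology Set

/-- A piecewise contracting interval map on `X = [c 0, c N]` with contraction pieces
`X_i` delimited by the points `c 0 < c 1 < … < c N`, contraction rate `lam ∈ (0,1)`,
and `fe i` the (unique) continuous `lam`-Lipschitz extension of `f` restricted to the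
`i`-th piece to its closure `[c (i-1), c i]`. The pieces are
`X_1 = [c 0, c 1)`, `X_i = (c (i-1), c i)` for `1 < i < N`, `X_N = (c (N-1), c N]`. -/
structure PCIM where
  N : ℕ
  hN : 2 ≤ N
  c : ℕ → ℝ
  lam : ℝ
  f : ℝ → ℝ
  fe : ℕ → ℝ → ℝ
  hc : StrictMonoOn c (Set.Iic N)
  hlam : lam ∈ Set.Ioo (0 : ℝ) 1
  hmap : Set.MapsTo f (Set.Icc (c 0) (c N)) (Set.Icc (c 0) (c N))
  hfe_lip : ∀ i, 1 ≤ i → i ≤ N →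
    ∀ x ∈ Set.Icc (c (i - 1)) (c i), ∀ y ∈ Set.Icc (c (i - 1)) (c i),
      |fe i x - fe i y| ≤ lam * |x - y|
  hfe_eq : ∀ i, 1 ≤ i → i ≤ N → ∀ x ∈ Set.Ioo (c (i - 1)) (c i), fe i x = f x
  hfe_left : fe 1 (c 0) = f (c 0)
  hfe_right : fe N (c N) = f (c N)

namespace PCIM

variable (P : PCIM)

/-- The phase space `X = [c 0, c N]`. -/
def X : Set ℝ := Set.Icc (P.c 0) (P.c P.N)

/-- The `i`-th contraction piece (`1 ≤ i ≤ N`). -/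
def piece (i : ℕ) : Set ℝ :=
  Set.Ioo (P.c (i - 1)) (P.c i)
    ∪ (if i = 1 then {P.c 0} else (∅ : Set ℝ))
    ∪ (if i = P.N then {P.c P.N} else (∅ : Set ℝ))

/-- `Δ`, the set of interior boundary points of the pieces. -/
def Δ : Set ℝ := {y | ∃ i, 1 ≤ i ∧ i < P.N ∧ y = P.c i}

/-- `X̃ = ⋂ n, f⁻ⁿ(X \ Δ)`: points whose whole forward orbit stays in `X` and avoids `Δ`. -/
def Xt : Set ℝ := {x | ∀ n : ℕ, P.f^[n] x ∈ P.X \ P.Δ}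

/-- Forward orbit of `x`. -/
def orbit (x : ℝ) : Set ℝ := Set.range fun n : ℕ => P.f^[n] x

/-- The ω-limit set of `x`: limits of subsequences of the forward orbit. -/
def omega (x : ℝ) : Set ℝ :=
  {y | ∃ φ : ℕ → ℕ, StrictMono φ ∧
    Filter.Tendsto (fun n => P.f^[φ n] x) Filter.atTop (nhds y)}

/-- `d_i^- = f_i (c_i)`, the left lateral limit of `f` at `c i`. -/
def dminus (i : ℕ) : ℝ := P.fe i (P.c i)

/-- `d_i^+ = f_{i+1} (c_i)`, the right lateral limit of `f` at `c i`. -/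
def dplus (i : ℕ) : ℝ := P.fe (i + 1) (P.c i)

/-- `D⁻ = {d_1^-, …, d_{N-1}^-}`. -/
def Dminus : Set ℝ := {y | ∃ i, 1 ≤ i ∧ i < P.N ∧ y = P.dminus i}

/-- `D⁺ = {d_1^+, …, d_{N-1}^+}`. -/
def Dplus : Set ℝ := {y | ∃ i, 1 ≤ i ∧ i < P.N ∧ y = P.dplus i}

/-- `D`, the set of all one-sided limits of `f` at endpoints of the pieces. -/
def D : Set ℝ := P.Dminus ∪ P.Dplus ∪ {P.fe 1 (P.c 0), P.fe P.N (P.c P.N)}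

/-- `A` is pseudo-invariant: for every `x ∈ A` at least one one-sided limit of `f`
at `x` (i.e. some `fe i x` with `x` in the closure of the `i`-th piece) belongs to `A`. -/
def PseudoInvariant (A : Set ℝ) : Prop :=
  ∀ x ∈ A, ∃ i, 1 ≤ i ∧ i ≤ P.N ∧ x ∈ Set.Icc (P.c (i - 1)) (P.c i) ∧ P.fe i x ∈ A

/-- `F_i(A) = closure (f (A ∩ X_i))`. -/
def Fmap (i : ℕ) (A : Set ℝ) : Set ℝ := closure (P.f '' (A ∩ P.piece i))

/-- For a word `w = [i_1, …, i_n]`, the set `F_{i_n} ∘ … ∘ F_{i_1} (X)`. -/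
def atomOf (w : List ℕ) : Set ℝ := w.foldl (fun S i => P.Fmap i S) P.X

/-- `A` is an atom of generation `n`. -/
def IsAtomGen (n : ℕ) (A : Set ℝ) : Prop :=
  ∃ w : List ℕ, w.length = n ∧ (∀ i ∈ w, 1 ≤ i ∧ i ≤ P.N) ∧
    A = P.atomOf w ∧ A.Nonempty

/-- `Lam n` is `Λ_{n+1}` of the paper: `Λ_1 = closure (f(X \ Δ))`,
`Λ_{n+1} = closure (f(Λ_n \ Δ))`. -/
def Lam (P : PCIM) : ℕ → Set ℝ
  | 0 => closure (P.f '' (P.X \ P.Δ))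
  | n + 1 => closure (P.f '' (P.Lam n \ P.Δ))

/-- The attractor `Λ = ⋂_{n ≥ 1} Λ_n`. -/
def attractor : Set ℝ := ⋂ n : ℕ, P.Lam n

/-- `c i ∈ Δ_lr(x)`: the boundary point `c i` is left-right recurrently visited by the
orbit of `x`. -/
def lrVisited (x : ℝ) (i : ℕ) : Prop :=
  1 ≤ i ∧ i < P.N ∧
  ∃ l r : ℕ → ℕ, StrictMono l ∧ StrictMono r ∧
    (∀ j, P.f^[l j] x ∈ P.piece i) ∧ (∀ j, P.f^[r j] x ∈ P.piece (i + 1)) ∧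
    Filter.Tendsto (fun j => P.f^[l j] x) Filter.atTop (nhds (P.c i)) ∧
    Filter.Tendsto (fun j => P.f^[r j] x) Filter.atTop (nhds (P.c i))

/-- `c i ∈ Δ_lr`: `c i` is left-right recurrently visited by the orbit of some point
of `X̃`. -/
def inΔlr (i : ℕ) : Prop := ∃ x ∈ P.Xt, P.lrVisited x i

/-- The set `Δ_lr ⊆ Δ`. -/
def ΔlrSet : Set ℝ := {y | ∃ i, P.inΔlr i ∧ y = P.c i}

/-- The relation `∼⁺` on `Δ_lr`: `c_i ∼⁺ c_j` iff `c_i = c_j` or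
(`c_i ∈ Δ_lr(d_j^+)` and `c_j ∈ Δ_lr(d_i^+)`). -/
def simP (a b : ℝ) : Prop :=
  a = b ∨ ∃ i j, P.inΔlr i ∧ P.inΔlr j ∧ a = P.c i ∧ b = P.c j ∧
    P.lrVisited (P.dplus j) i ∧ P.lrVisited (P.dplus i) j

/-- The relation `≼⁺` (on representatives): `[c_i] ≼⁺ [c_j]` iff `[c_i] = [c_j]` or
`c_i ∈ Δ_lr(d_j^+)`. -/
def preP (a b : ℝ) : Prop :=
  P.simP a b ∨ ∃ i j, P.inΔlr i ∧ P.inΔlr j ∧ a = P.c i ∧ b = P.c j ∧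
    P.lrVisited (P.dplus j) i

/-- `[c i]` is a minimal class for the partial order `≼⁺`. -/
def MinimalClass (i : ℕ) : Prop :=
  P.inΔlr i ∧ ∀ j, P.inΔlr j → P.preP (P.c j) (P.c i) → P.simP (P.c j) (P.c i)

/-- `f` is injective on each contraction piece. -/
def InjPieces : Prop := ∀ i, 1 ≤ i → i ≤ P.N → Set.InjOn P.f (P.piece i)

/-- `f` is (strictly) increasing on each contraction piece. -/
def IncrPieces : Prop := ∀ i, 1 ≤ i → i ≤ P.N → StrictMonoOn P.f (P.piece i)

/-- `x` is a periodic point of `f`. -/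
def IsPeriodic (x : ℝ) : Prop := ∃ p : ℕ, 1 ≤ p ∧ P.f^[p] x = x

/-- `η` is the itinerary of `x`: `f^[n] x ∈ X_{η n}` for all `n`. -/
def IsItinerary (x : ℝ) (η : ℕ → ℕ) : Prop :=
  ∀ n, 1 ≤ η n ∧ η n ≤ P.N ∧ P.f^[n] x ∈ P.piece (η n)

end PCIM

/-- The word of length `n` of the sequence `η` starting at position `t`. -/
def wordAt (η : ℕ → ℕ) (t n : ℕ) : List ℕ := (List.range n).map fun m => η (t + m)

/-- The complexity function of the sequence `η`: the number of distinct words of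
length `n` occurring in `η`. -/
noncomputable def complexity (η : ℕ → ℕ) (n : ℕ) : ℕ := Set.ncard {w : List ℕ | ∃ t, w = wordAt η t n}

namespace PCIM

variable {P : PCIM}

lemma lam_pos : 0 < P.lam := P.hlam.1
lemma lam_lt_one : P.lam < 1 := P.hlam.2

lemma cmono {i j : ℕ} (hij : i ≤ j) (hj : j ≤ P.N) : P.c i ≤ P.c j :=
  P.hc.monotoneOn (Set.mem_Iic.2 (le_trans hij hj)) (Set.mem_Iic.2 hj) hij

lemma cslt {i j : ℕ} (hij : i < j) (hj : j ≤ P.N) : P.c i < P.c j :=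
  P.hc (Set.mem_Iic.2 (le_trans (le_of_lt hij) hj)) (Set.mem_Iic.2 hj) hij

lemma piece_subset {i : ℕ} (hi1 : 1 ≤ i) (hiN : i ≤ P.N) :
    P.piece i ⊆ Set.Icc (P.c (i - 1)) (P.c i) := by
  intro x hx
  rcases hx with (hx | hx) | hx
  · exact Set.Ioo_subset_Icc_self hx
  · by_cases h1 : i = 1
    · simp only [h1, if_pos rfl, Set.mem_singleton_iff] at hx
      subst hx
      subst h1
      exact ⟨le_refl _, le_of_lt (cslt (by norm_num) hiN)⟩
    · simp [h1] at hx
  · by_cases hN : i = P.N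
    · simp only [hN, if_pos rfl, Set.mem_singleton_iff] at hx
      subst hx
      subst hN
      exact ⟨le_of_lt (cslt (by omega) (le_refl _)), le_refl _⟩
    · simp [hN] at hx

lemma Ioo_subset_piece {i : ℕ} : Set.Ioo (P.c (i-1)) (P.c i) ⊆ P.piece i := by
  intro x hx; exact Or.inl (Or.inl hx)

lemma exists_piece {x : ℝ} (hx : x ∈ P.X \ P.Δ) : ∃ i, 1 ≤ i ∧ i ≤ P.N ∧ x ∈ P.piece i := by
  classical
  obtain ⟨⟨h0, hN⟩, hΔ⟩ := hx
  rcases eq_or_lt_of_le h0 with h | h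
  · refine ⟨1, le_refl _, by have := P.hN; omega, ?_⟩
    exact Or.inl (Or.inr (by simp [← h]))
  · have hex : ∃ i, i ≤ P.N ∧ x ≤ P.c i := ⟨P.N, le_refl _, hN⟩
    obtain ⟨hiN, hxi⟩ := Nat.find_spec hex
    set i := Nat.find hex with hi
    have hipos : 1 ≤ i := by
      rcases Nat.eq_zero_or_pos i with h0' | h0'
      · exfalso; rw [h0'] at hxi; exact absurd hxi (not_le.2 h)
      · exact h0'
    have hlt : P.c (i - 1) < x := by
      have := Nat.find_min hex (m := i - 1) (by omega)
      push_neg at this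
      exact this (by omega)
    rcases lt_or_eq_of_le hxi with hxlt | hxeq
    · exact ⟨i, hipos, hiN, Ioo_subset_piece ⟨hlt, hxlt⟩⟩
    · have hiN' : i = P.N := by
        by_contra hne
        exact hΔ ⟨i, hipos, lt_of_le_of_ne hiN hne, hxeq⟩
      refine ⟨i, hipos, hiN, Or.inr ?_⟩
      rw [if_pos hiN']
      rw [Set.mem_singleton_iff, hxeq, hiN']

lemma fe_eq_f {i : ℕ} {x : ℝ} (hi1 : 1 ≤ i) (hiN : i ≤ P.N) (hx : x ∈ P.piece i) :
    P.fe i x = P.f x := by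
  rcases hx with (hx | hx) | hx
  · exact P.hfe_eq i hi1 hiN x hx
  · by_cases h1 : i = 1
    · simp only [h1, if_pos rfl, Set.mem_singleton_iff] at hx
      subst hx; subst h1; exact P.hfe_left
    · simp [h1] at hx
  · by_cases hN : i = P.N
    · simp only [hN, if_pos rfl, Set.mem_singleton_iff] at hx
      subst hx; subst hN; exact P.hfe_right
    · simp [hN] at hx

lemma piece_le_piece {i j : ℕ} {x y : ℝ} (hi1 : 1 ≤ i) (hiN : i ≤ P.N) (hj1 : 1 ≤ j)
    (hjN : j ≤ P.N) (hx : x ∈ P.piece i) (hy : y ∈ P.piece j) (hxy : x ≤ y) : i ≤ j := by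
  by_contra hlt
  push_neg at hlt
  have hyj := piece_subset hj1 hjN hy
  have hxi := piece_subset hi1 hiN hx
  have h1 : P.c j ≤ P.c (i - 1) := cmono (by omega) (by omega)
  have hyx : y = P.c j := le_antisymm hyj.2 (le_trans (le_trans h1 hxi.1) hxy)
  rcases hy with (hy | hy) | hy
  · exact absurd hyx (ne_of_lt hy.2)
  · by_cases h1' : j = 1
    · simp only [h1', if_pos rfl, Set.mem_singleton_iff] at hy
      rw [hy] at hyx
      exact absurd hyx (ne_of_lt (cslt (show 0 < j by omega) hjN))
    · simp [h1'] at hy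
  · by_cases hN' : j = P.N
    · omega
    · simp [hN'] at hy

lemma fe_monotoneOn (hmono : P.IncrPieces) {i : ℕ} (hi1 : 1 ≤ i) (hiN : i ≤ P.N) :
    MonotoneOn (P.fe i) (Set.Icc (P.c (i - 1)) (P.c i)) := by
  intro a ha b hb hab
  rcases eq_or_lt_of_le hab with h | hab'
  · rw [h]
  apply le_of_forall_pos_le_add
  intro ε hε
  set δ := ε / (2 * P.lam) with hδdef
  have hδ : 0 < δ := div_pos hε (by have := P.lam_pos; linarith)
  obtain ⟨t₁, ht₁⟩ := exists_between (lt_min hab' (by linarith : a < a + δ))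
  have ht₁Ioo : t₁ ∈ Set.Ioo (P.c (i - 1)) (P.c i) :=
    ⟨lt_of_le_of_lt ha.1 ht₁.1, lt_of_lt_of_le (lt_of_lt_of_le ht₁.2 (min_le_left _ _)) hb.2⟩
  have ht₁b : t₁ < b := lt_of_lt_of_le ht₁.2 (min_le_left _ _)
  obtain ⟨t₂, ht₂⟩ := exists_between (max_lt ht₁b (by linarith : b - δ < b))
  have ht₂Ioo : t₂ ∈ Set.Ioo (P.c (i - 1)) (P.c i) :=
    ⟨lt_trans ht₁Ioo.1 (lt_of_le_of_lt (le_max_left _ _) ht₂.1), lt_of_lt_of_le ht₂.2 hb.2⟩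
  have h12 : t₁ ≤ t₂ := le_of_lt (lt_of_le_of_lt (le_max_left _ _) ht₂.1)
  have hlip1 := P.hfe_lip i hi1 hiN a ha t₁ (Set.Ioo_subset_Icc_self ht₁Ioo)
  have hlip2 := P.hfe_lip i hi1 hiN t₂ (Set.Ioo_subset_Icc_self ht₂Ioo) b hb
  have hf12 : P.fe i t₁ ≤ P.fe i t₂ := by
    rw [P.hfe_eq i hi1 hiN t₁ ht₁Ioo, P.hfe_eq i hi1 hiN t₂ ht₂Ioo]
    exact (hmono i hi1 hiN).monotoneOn (Ioo_subset_piece ht₁Ioo) (Ioo_subset_piece ht₂Ioo) h12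
  have habs1 : P.fe i a - P.fe i t₁ ≤ P.lam * (t₁ - a) := by
    have := le_trans (le_abs_self _) hlip1
    rwa [abs_of_nonpos (by linarith [ht₁.1] : a - t₁ ≤ 0), neg_sub] at this
  have habs2 : P.fe i t₂ - P.fe i b ≤ P.lam * (b - t₂) := by
    have := le_trans (le_abs_self _) hlip2
    rwa [abs_of_nonpos (by linarith [ht₂.2] : t₂ - b ≤ 0), neg_sub] at this
  have ht₁a : t₁ - a < δ := by
    have := lt_of_lt_of_le ht₁.2 (min_le_right _ _); linarith
  have ht₂b : b - t₂ < δ := by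
    have := lt_of_le_of_lt (le_max_right _ _) ht₂.1; linarith
  have hlam := P.lam_pos
  have : P.fe i a ≤ P.fe i b + P.lam * δ + P.lam * δ := by nlinarith
  have hδε : P.lam * δ + P.lam * δ = ε := by
    rw [hδdef]; field_simp; ring
  linarith

end PCIM
namespace PCIM

variable {P : PCIM}

lemma Xt_iterate {x : ℝ} (hx : x ∈ P.Xt) (n : ℕ) : P.f^[n] x ∈ P.Xt := by
  intro m
  have := hx (m + n)
  rwa [Function.iterate_add_apply] at this

lemma omega_shift (x : ℝ) (t : ℕ) : P.omega (P.f^[t] x) = P.omega x := by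
  ext z
  constructor
  · rintro ⟨φ, hφ, hlim⟩
    refine ⟨fun n => φ n + t, fun a b hab => by dsimp only; have := hφ hab; omega, ?_⟩
    convert hlim using 2 with n
    rw [Function.iterate_add_apply]
  · rintro ⟨φ, hφ, hlim⟩
    refine ⟨fun n => φ (n + t) - t, ?_, ?_⟩
    · intro a b hab
      have h1 := hφ (show a + t < b + t by omega)
      have h2 : t ≤ φ (a + t) := le_trans (by omega) (hφ.le_apply)
      dsimp only
      omega
    · have : ∀ n, P.f^[φ (n + t) - t] (P.f^[t] x) = P.f^[φ (n + t)] x := by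
        intro n
        rw [← Function.iterate_add_apply]
        congr 1
        have : t ≤ φ (n + t) := le_trans (by omega) (hφ.le_apply)
        omega
      simp only [this]
      exact hlim.comp (tendsto_add_atTop_nat t)

lemma iterate_mul_period {x : ℝ} {p : ℕ} (hp : P.f^[p] x = x) (k : ℕ) : P.f^[p * k] x = x := by
  induction k with
  | zero => simp
  | succ k ih =>
    rw [Nat.mul_succ, Function.iterate_add_apply, hp, ih]

lemma iterate_mod_period {x : ℝ} {p : ℕ} (hp1 : 1 ≤ p) (hp : P.f^[p] x = x) (n : ℕ) :
    P.f^[n] x = P.f^[n % p] x := by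
  conv_lhs => rw [show n = n % p + p * (n / p) from (Nat.mod_add_div n p).symm]
  rw [Function.iterate_add_apply, iterate_mul_period hp]

lemma orbit_eq_image {x : ℝ} {p : ℕ} (hp1 : 1 ≤ p) (hp : P.f^[p] x = x) :
    P.orbit x = (fun k => P.f^[k] x) '' Set.Iio p := by
  apply Set.Subset.antisymm
  · rintro y ⟨n, rfl⟩
    exact ⟨n % p, by simp [Nat.mod_lt _ (by omega : 0 < p)],
      (iterate_mod_period hp1 hp n).symm⟩
  · rintro y ⟨k, _, rfl⟩
    exact ⟨k, rfl⟩

lemma orbit_finite {x : ℝ} (hper : P.IsPeriodic x) : (P.orbit x).Finite := by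
  obtain ⟨p, hp1, hp⟩ := hper
  rw [orbit_eq_image hp1 hp]
  exact (Set.finite_Iio p).image _

lemma omega_eq_orbit {x : ℝ} (hper : P.IsPeriodic x) : P.omega x = P.orbit x := by
  obtain ⟨p, hp1, hp⟩ := hper
  apply Set.Subset.antisymm
  · rintro z ⟨φ, hφ, hlim⟩
    have hfin : (P.orbit x).Finite := orbit_finite ⟨p, hp1, hp⟩
    have hcl : IsClosed (P.orbit x) := hfin.isClosed
    refine hcl.mem_of_tendsto hlim ?_
    exact Filter.Eventually.of_forall fun n => ⟨φ n, rfl⟩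
  · rintro z ⟨k, rfl⟩
    refine ⟨fun n => k + n * p, ?_, ?_⟩
    · intro a b hab
      have : a * p < b * p := Nat.mul_lt_mul_of_pos_right hab (by omega)
      dsimp only
      omega
    · have : ∀ n, P.f^[k + n * p] x = P.f^[k] x := by
        intro n
        rw [Function.iterate_add_apply, mul_comm, iterate_mul_period hp]
      simp only [this]
      exact tendsto_const_nhds

lemma omega_congr {a b : ℝ}
    (h : Filter.Tendsto (fun n => P.f^[n] a - P.f^[n] b) Filter.atTop (nhds 0)) :
    P.omega a = P.omega b := by
  have key : ∀ a b : ℝ,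
      Filter.Tendsto (fun n => P.f^[n] a - P.f^[n] b) Filter.atTop (nhds 0) →
      P.omega a ⊆ P.omega b := by
    intro a b h z hz
    obtain ⟨φ, hφ, hlim⟩ := hz
    refine ⟨φ, hφ, ?_⟩
    have hd : Filter.Tendsto (fun n => P.f^[φ n] a - P.f^[φ n] b) Filter.atTop (nhds 0) :=
      h.comp hφ.tendsto_atTop
    have := hlim.sub hd
    simpa using this
  have h' : Filter.Tendsto (fun n => P.f^[n] b - P.f^[n] a) Filter.atTop (nhds 0) := by
    have := h.neg
    simpa using this
  exact Set.Subset.antisymm (key a b h) (key b a h')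

lemma exists_pos_dist {s : Set ℝ} (h : s.Finite) (hn : s.Nonempty) {d : ℝ} (hd : d ∉ s) :
    ∃ δ > 0, ∀ x ∈ s, δ ≤ |x - d| := by
  classical
  set t := h.toFinset.image fun x => |x - d| with ht
  have htn : t.Nonempty := by
    rw [ht, Finset.image_nonempty, Set.Finite.toFinset_nonempty]
    exact hn
  refine ⟨t.min' htn, ?_, ?_⟩
  · obtain ⟨x, hx, hxe⟩ := Finset.mem_image.1 (t.min'_mem htn)
    rw [← hxe]
    rw [Set.Finite.mem_toFinset] at hx
    exact abs_pos.2 (sub_ne_zero.2 (fun he => hd (he ▸ hx)))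
  · intro x hx
    apply Finset.min'_le
    exact Finset.mem_image.2 ⟨x, (Set.Finite.mem_toFinset h).2 hx, rfl⟩

open Classical in
noncomputable def pidx (P : PCIM) (y : ℝ) : ℕ :=
  if h : ∃ i, 1 ≤ i ∧ i ≤ P.N ∧ y ∈ P.piece i then h.choose else 0

lemma pidx_spec {y : ℝ} (hy : y ∈ P.X \ P.Δ) :
    1 ≤ P.pidx y ∧ P.pidx y ≤ P.N ∧ y ∈ P.piece (P.pidx y) := by
  have h := exists_piece hy
  rw [pidx, dif_pos h]
  exact h.choose_spec

end PCIM
namespace PCIM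

open Classical in
noncomputable def useqP (P : PCIM) (x₀ : ℝ) : ℕ → ℝ
  | 0 => P.fe (P.pidx x₀) (P.c (P.pidx x₀ - 1))
  | n+1 =>
      if (∃ i, 1 ≤ i ∧ i ≤ P.N ∧ useqP P x₀ n ∈ P.piece i ∧ P.f^[n+1] x₀ ∈ P.piece i)
      then P.f (useqP P x₀ n)
      else P.fe (P.pidx (P.f^[n+1] x₀)) (P.c (P.pidx (P.f^[n+1] x₀) - 1))

variable {P : PCIM}

lemma useqP_zero (x₀ : ℝ) : useqP P x₀ 0 = P.fe (P.pidx x₀) (P.c (P.pidx x₀ - 1)) := by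
  rw [useqP]

lemma useqP_succ_pos {x₀ : ℝ} {n : ℕ}
    (h : ∃ i, 1 ≤ i ∧ i ≤ P.N ∧ useqP P x₀ n ∈ P.piece i ∧ P.f^[n+1] x₀ ∈ P.piece i) :
    useqP P x₀ (n+1) = P.f (useqP P x₀ n) := by
  rw [useqP]; exact if_pos h

lemma useqP_succ_neg {x₀ : ℝ} {n : ℕ}
    (h : ¬ ∃ i, 1 ≤ i ∧ i ≤ P.N ∧ useqP P x₀ n ∈ P.piece i ∧ P.f^[n+1] x₀ ∈ P.piece i) :
    useqP P x₀ (n+1) = P.fe (P.pidx (P.f^[n+1] x₀)) (P.c (P.pidx (P.f^[n+1] x₀) - 1)) := by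
  rw [useqP]; exact if_neg h

lemma formP_mem' {i : ℕ} (h2 : 2 ≤ i) (hN : i ≤ P.N) :
    P.fe i (P.c (i - 1)) ∈ P.Dplus := by
  refine ⟨i - 1, by omega, by omega, ?_⟩
  rw [PCIM.dplus, show i - 1 + 1 = i by omega]

lemma formP_mem {i : ℕ} (h1 : 1 ≤ i) (hN : i ≤ P.N) :
    P.fe i (P.c (i - 1)) ∈ P.Dplus ∪ ({P.fe 1 (P.c 0)} : Set ℝ) := by
  rcases eq_or_lt_of_le h1 with h | h
  · right
    rw [← h]
    rfl
  · exact Or.inl (formP_mem' h hN)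

lemma formP_mem_D {i : ℕ} (h1 : 1 ≤ i) (hN : i ≤ P.N) :
    P.fe i (P.c (i - 1)) ∈ P.D := by
  rcases formP_mem h1 hN with h | h
  · exact Or.inl (Or.inr h)
  · exact Or.inr (by rw [Set.mem_singleton_iff.1 h]; exact Set.mem_insert _ _)

lemma exists_dplus (hmono : P.IncrPieces) (hD : P.D ⊆ P.Xt) {x₀ : ℝ} (hx₀ : x₀ ∈ P.Xt)
    (hper : P.IsPeriodic x₀) :
    ∃ d ∈ P.Dplus ∪ ({P.fe 1 (P.c 0)} : Set ℝ), P.omega d = P.omega x₀ := by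
  classical
  have hlam0 := P.lam_pos
  have hlam1 := P.lam_lt_one
  set u : ℕ → ℝ := useqP P x₀ with hu
  have hx₀' : x₀ ∈ P.X \ P.Δ := by simpa using hx₀ 0
  have hY : ∀ n : ℕ, P.f^[n+1] x₀ ∈ P.X \ P.Δ := fun n => hx₀ (n+1)
  have hpx := pidx_spec hx₀'
  have hpY : ∀ n : ℕ, 1 ≤ P.pidx (P.f^[n+1] x₀) ∧ P.pidx (P.f^[n+1] x₀) ≤ P.N ∧
      P.f^[n+1] x₀ ∈ P.piece (P.pidx (P.f^[n+1] x₀)) := fun n => pidx_spec (hY n)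
  -- main invariant
  have hinv : ∀ n, u n ∈ P.Xt ∧ u n ≤ P.f^[n+1] x₀ := by
    intro n
    induction n with
    | zero =>
      constructor
      · rw [hu, useqP_zero]
        exact hD (formP_mem_D hpx.1 hpx.2.1)
      · rw [hu, useqP_zero]
        have hIcc := piece_subset hpx.1 hpx.2.1 hpx.2.2
        have h1 : P.fe (P.pidx x₀) (P.c (P.pidx x₀ - 1)) ≤ P.fe (P.pidx x₀) x₀ :=
          fe_monotoneOn hmono hpx.1 hpx.2.1
            ⟨le_rfl, cmono (by omega) hpx.2.1⟩ hIcc hIcc.1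
        rw [Function.iterate_one]
        calc P.fe (P.pidx x₀) (P.c (P.pidx x₀ - 1)) ≤ P.fe (P.pidx x₀) x₀ := h1
          _ = P.f x₀ := fe_eq_f hpx.1 hpx.2.1 hpx.2.2
    | succ n ih =>
      obtain ⟨hXt, hle⟩ := ih
      by_cases hcom : ∃ i, 1 ≤ i ∧ i ≤ P.N ∧ u n ∈ P.piece i ∧ P.f^[n+1] x₀ ∈ P.piece i
      · obtain ⟨i, hi1, hiN, hui, hYi⟩ := hcom
        rw [hu, useqP_succ_pos ⟨i, hi1, hiN, by rw [← hu]; exact hui, hYi⟩, ← hu]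
        constructor
        · have := Xt_iterate hXt 1
          simpa using this
        · rw [Function.iterate_succ_apply']
          exact (hmono i hi1 hiN).monotoneOn hui hYi hle
      · rw [hu, useqP_succ_neg (by rw [← hu]; exact hcom)]
        have hp := hpY n
        constructor
        · exact hD (formP_mem_D hp.1 hp.2.1)
        · have hIcc := piece_subset hp.1 hp.2.1 hp.2.2
          have h1 : P.fe (P.pidx (P.f^[n+1] x₀)) (P.c (P.pidx (P.f^[n+1] x₀) - 1))
              ≤ P.fe (P.pidx (P.f^[n+1] x₀)) (P.f^[n+1] x₀) :=
            fe_monotoneOn hmono hp.1 hp.2.1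
              ⟨le_rfl, cmono (by omega) hp.2.1⟩ hIcc hIcc.1
          calc P.fe (P.pidx (P.f^[n+1] x₀)) (P.c (P.pidx (P.f^[n+1] x₀) - 1))
              ≤ P.fe (P.pidx (P.f^[n+1] x₀)) (P.f^[n+1] x₀) := h1
            _ = P.f (P.f^[n+1] x₀) := fe_eq_f hp.1 hp.2.1 hp.2.2
            _ = P.f^[n+1+1] x₀ := (Function.iterate_succ_apply' _ _ _).symm
  -- split data at a restart step
  have hsplit : ∀ n, (¬ ∃ i, 1 ≤ i ∧ i ≤ P.N ∧ u n ∈ P.piece i ∧ P.f^[n+1] x₀ ∈ P.piece i) →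
      2 ≤ P.pidx (P.f^[n+1] x₀) ∧ u n ≤ P.c (P.pidx (P.f^[n+1] x₀) - 1) := by
    intro n hcom
    obtain ⟨hXt, hle⟩ := hinv n
    have hun : u n ∈ P.X \ P.Δ := by simpa using hXt 0
    have hpu := pidx_spec hun
    have hp := hpY n
    have hjle : P.pidx (u n) ≤ P.pidx (P.f^[n+1] x₀) :=
      piece_le_piece hpu.1 hpu.2.1 hp.1 hp.2.1 hpu.2.2 hp.2.2 hle
    have hjne : P.pidx (u n) ≠ P.pidx (P.f^[n+1] x₀) := by
      intro he
      exact hcom ⟨P.pidx (u n), hpu.1, hpu.2.1, hpu.2.2, he ▸ hp.2.2⟩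
    have hjlt : P.pidx (u n) < P.pidx (P.f^[n+1] x₀) := lt_of_le_of_ne hjle hjne
    refine ⟨by omega, ?_⟩
    calc u n ≤ P.c (P.pidx (u n)) := (piece_subset hpu.1 hpu.2.1 hpu.2.2).2
      _ ≤ P.c (P.pidx (P.f^[n+1] x₀) - 1) := cmono (by omega) (by omega)
  -- gap contraction
  have hgap : ∀ n, P.f^[n+2] x₀ - u (n+1) ≤ P.lam * (P.f^[n+1] x₀ - u n) := by
    intro n
    obtain ⟨hXt, hle⟩ := hinv n
    by_cases hcom : ∃ i, 1 ≤ i ∧ i ≤ P.N ∧ u n ∈ P.piece i ∧ P.f^[n+1] x₀ ∈ P.piece i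
    · obtain ⟨i, hi1, hiN, hui, hYi⟩ := hcom
      rw [hu, useqP_succ_pos ⟨i, hi1, hiN, by rw [← hu]; exact hui, hYi⟩, ← hu]
      have hlip := P.hfe_lip i hi1 hiN (P.f^[n+1] x₀) (piece_subset hi1 hiN hYi)
        (u n) (piece_subset hi1 hiN hui)
      rw [fe_eq_f hi1 hiN hYi, fe_eq_f hi1 hiN hui] at hlip
      have h1 := le_trans (le_abs_self _) hlip
      rw [abs_of_nonneg (by linarith : (0:ℝ) ≤ P.f^[n+1] x₀ - u n)] at h1
      rw [show n + 2 = (n+1) + 1 by omega, Function.iterate_succ_apply']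
      linarith
    · obtain ⟨hi2, hule⟩ := hsplit n hcom
      rw [hu, useqP_succ_neg (by rw [← hu]; exact hcom)]
      have hp := hpY n
      have hIcc := piece_subset hp.1 hp.2.1 hp.2.2
      have hlip := P.hfe_lip (P.pidx (P.f^[n+1] x₀)) hp.1 hp.2.1 (P.f^[n+1] x₀) hIcc
        (P.c (P.pidx (P.f^[n+1] x₀) - 1)) ⟨le_rfl, cmono (by omega) hp.2.1⟩
      have h1 := le_trans (le_abs_self _) hlip
      rw [abs_of_nonneg (by linarith [hIcc.1] :
        (0:ℝ) ≤ P.f^[n+1] x₀ - P.c (P.pidx (P.f^[n+1] x₀) - 1))] at h1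
      rw [show n + 2 = (n+1) + 1 by omega, Function.iterate_succ_apply',
        ← fe_eq_f hp.1 hp.2.1 hp.2.2]
      have hlam' : P.lam * (P.f^[n+1] x₀ - P.c (P.pidx (P.f^[n+1] x₀) - 1))
          ≤ P.lam * (P.f^[n+1] x₀ - u n) := by
        apply mul_le_mul_of_nonneg_left _ (le_of_lt hlam0)
        linarith
      linarith
  -- gap tends to zero
  have hgap_pow : ∀ n, P.f^[n+1] x₀ - u n ≤ P.lam ^ n * (P.f^[1] x₀ - u 0) := by
    intro n
    induction n with
    | zero => simp
    | succ n ih =>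
      calc P.f^[n+2] x₀ - u (n+1) ≤ P.lam * (P.f^[n+1] x₀ - u n) := hgap n
        _ ≤ P.lam * (P.lam ^ n * (P.f^[1] x₀ - u 0)) :=
            mul_le_mul_of_nonneg_left ih (le_of_lt hlam0)
        _ = P.lam ^ (n+1) * (P.f^[1] x₀ - u 0) := by ring
  have htend : Filter.Tendsto (fun n => P.f^[n+1] x₀ - u n) Filter.atTop (nhds 0) := by
    apply squeeze_zero (fun n => by linarith [(hinv n).2]) hgap_pow
    have := (tendsto_pow_atTop_nhds_zero_of_lt_one (le_of_lt hlam0) hlam1).mul_const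
      (P.f^[1] x₀ - u 0)
    simpa using this
  -- dichotomy
  by_cases hA : ∃ m, ∀ n, m ≤ n →
      ∃ i, 1 ≤ i ∧ i ≤ P.N ∧ u n ∈ P.piece i ∧ P.f^[n+1] x₀ ∈ P.piece i
  · -- finitely many restarts
    obtain ⟨m, hm⟩ := hA
    set Q : ℕ → Prop := fun k => k = 0 ∨
      ¬ ∃ i, 1 ≤ i ∧ i ≤ P.N ∧ u (k-1) ∈ P.piece i ∧ P.f^[k-1+1] x₀ ∈ P.piece i with hQ
    set m₀ := Nat.findGreatest Q m with hm₀
    have hQm₀ : Q m₀ := Nat.findGreatest_spec (Nat.zero_le m)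
      (show Q 0 by simp [hQ])
    have hnr : ∀ n, m₀ ≤ n →
        ∃ i, 1 ≤ i ∧ i ≤ P.N ∧ u n ∈ P.piece i ∧ P.f^[n+1] x₀ ∈ P.piece i := by
      intro n hn
      by_cases hnm : m ≤ n
      · exact hm n hnm
      · push_neg at hnm
        by_contra hnc
        have hgr := Nat.findGreatest_is_greatest (P := Q) (n := m) (k := n+1)
          (show Nat.findGreatest Q m < n + 1 by omega) (by omega)
        exact hgr (show Q (n+1) by simp only [hQ]; exact Or.inr (by simpa using hnc))
    have horb : ∀ k, u (m₀ + k) = P.f^[k] (u m₀) := by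
      intro k
      induction k with
      | zero => simp
      | succ k ih =>
        have := hnr (m₀ + k) (by omega)
        rw [show m₀ + (k+1) = (m₀ + k) + 1 by omega, hu, useqP_succ_pos (by rw [← hu]; exact this),
          ← hu, ih, Function.iterate_succ_apply']
    have humem : u m₀ ∈ P.Dplus ∪ ({P.fe 1 (P.c 0)} : Set ℝ) := by
      by_cases h0 : m₀ = 0
      · rw [h0, hu, useqP_zero]
        exact formP_mem hpx.1 hpx.2.1
      · rcases hQm₀ with h | h
        · exact absurd h h0
        · have hm₀1 : m₀ = (m₀ - 1) + 1 := by omega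
          rw [hm₀1, hu, useqP_succ_neg (by rw [← hu]; exact h)]
          exact formP_mem (hpY (m₀ - 1)).1 (hpY (m₀ - 1)).2.1
    refine ⟨u m₀, humem, ?_⟩
    have hdiff : Filter.Tendsto (fun k => P.f^[k] (u m₀) - P.f^[k] (P.f^[m₀+1] x₀))
        Filter.atTop (nhds 0) := by
      have heq : ∀ k, P.f^[k] (u m₀) - P.f^[k] (P.f^[m₀+1] x₀)
          = -(P.f^[(k + m₀)+1] x₀ - u (k + m₀)) := by
        intro k
        have h1 : P.f^[k] (P.f^[m₀+1] x₀) = P.f^[(k + m₀)+1] x₀ := by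
          rw [← Function.iterate_add_apply, show k + (m₀+1) = k + m₀ + 1 by omega]
        have h2 : P.f^[k] (u m₀) = u (k + m₀) := by
          rw [show k + m₀ = m₀ + k by omega, horb]
        rw [h1, h2]
        ring
      have hcmp := (htend.comp (tendsto_add_atTop_nat m₀)).neg
      simp only [neg_zero] at hcmp
      exact hcmp.congr fun k => (heq k).symm
    exact (omega_congr hdiff).trans (omega_shift x₀ (m₀+1))
  · -- infinitely many restarts
    have hA' : ∀ m, ∃ n, m ≤ n ∧
        ¬ ∃ i, 1 ≤ i ∧ i ≤ P.N ∧ u n ∈ P.piece i ∧ P.f^[n+1] x₀ ∈ P.piece i := by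
      intro m
      by_contra h
      exact hA ⟨m, fun n hn => by by_contra hc; exact h ⟨n, hn, hc⟩⟩
    by_cases hpig : ∃ is, 2 ≤ is ∧ is ≤ P.N ∧ ∀ m, ∃ n, m ≤ n ∧
        (¬∃ i, 1 ≤ i ∧ i ≤ P.N ∧ u n ∈ P.piece i ∧ P.f^[n+1] x₀ ∈ P.piece i) ∧
        P.pidx (P.f^[n+1] x₀) = is
    · obtain ⟨is, his2, hisN, hinf⟩ := hpig
      have hdD : P.fe is (P.c (is - 1)) ∈ P.Dplus := formP_mem' his2 hisN
      have hdS : P.fe is (P.c (is - 1)) ∈ P.orbit x₀ := by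
        by_contra hdS
        obtain ⟨δ, hδ, hdist⟩ := exists_pos_dist (orbit_finite hper) ⟨x₀, 0, rfl⟩ hdS
        obtain ⟨K, hK⟩ := (Metric.tendsto_atTop.1 htend) δ hδ
        obtain ⟨n, hnK, hnc, hni⟩ := hinf K
        have hu1 : u (n+1) = P.fe is (P.c (is - 1)) := by
          rw [hu, useqP_succ_neg (by rw [← hu]; exact hnc), hni]
        have h1 := hdist _ (⟨n+2, rfl⟩ : P.f^[n+2] x₀ ∈ P.orbit x₀)
        have h2 := hK (n+1) (by omega)
        rw [Real.dist_eq, sub_zero, hu1, show n+1+1 = n+2 by omega] at h2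
        linarith
      obtain ⟨t, ht⟩ := hdS
      refine ⟨P.fe is (P.c (is - 1)), Or.inl hdD, ?_⟩
      rw [← ht]
      exact omega_shift x₀ t
    · exfalso
      have hch : ∀ is, ∃ m, 2 ≤ is → is ≤ P.N → ∀ n, m ≤ n →
          (¬∃ i, 1 ≤ i ∧ i ≤ P.N ∧ u n ∈ P.piece i ∧ P.f^[n+1] x₀ ∈ P.piece i) →
          P.pidx (P.f^[n+1] x₀) ≠ is := by
        intro is
        by_cases h2 : 2 ≤ is
        · by_cases hN : is ≤ P.N
          · by_contra hcon
            apply hpig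
            refine ⟨is, h2, hN, ?_⟩
            intro m
            by_contra hno
            apply hcon
            refine ⟨m, fun _ _ n hn hc he => ?_⟩
            exact hno ⟨n, hn, hc, he⟩
          · exact ⟨0, fun _ hN' => absurd hN' hN⟩
        · exact ⟨0, fun h2' _ => absurd h2' h2⟩
      choose M hM using hch
      obtain ⟨n, hnB, hnc⟩ := hA' (Finset.sup (Finset.range (P.N+1)) M)
      obtain ⟨hi2, _⟩ := hsplit n hnc
      have hpn := hpY n
      have hMle : M (P.pidx (P.f^[n+1] x₀)) ≤ Finset.sup (Finset.range (P.N+1)) M :=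
        Finset.le_sup (Finset.mem_range.2 (by omega))
      exact hM _ hi2 hpn.2.1 n (le_trans hMle hnB) hnc rfl

end PCIM
namespace PCIM

open Classical in
noncomputable def useqM (P : PCIM) (x₀ : ℝ) : ℕ → ℝ
  | 0 => P.fe (P.pidx x₀) (P.c (P.pidx x₀))
  | n+1 =>
      if (∃ i, 1 ≤ i ∧ i ≤ P.N ∧ useqM P x₀ n ∈ P.piece i ∧ P.f^[n+1] x₀ ∈ P.piece i)
      then P.f (useqM P x₀ n)
      else P.fe (P.pidx (P.f^[n+1] x₀)) (P.c (P.pidx (P.f^[n+1] x₀)))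

variable {P : PCIM}

lemma useqM_zero (x₀ : ℝ) : useqM P x₀ 0 = P.fe (P.pidx x₀) (P.c (P.pidx x₀)) := by
  rw [useqM]

lemma useqM_succ_pos {x₀ : ℝ} {n : ℕ}
    (h : ∃ i, 1 ≤ i ∧ i ≤ P.N ∧ useqM P x₀ n ∈ P.piece i ∧ P.f^[n+1] x₀ ∈ P.piece i) :
    useqM P x₀ (n+1) = P.f (useqM P x₀ n) := by
  rw [useqM]; exact if_pos h

lemma useqM_succ_neg {x₀ : ℝ} {n : ℕ}
    (h : ¬ ∃ i, 1 ≤ i ∧ i ≤ P.N ∧ useqM P x₀ n ∈ P.piece i ∧ P.f^[n+1] x₀ ∈ P.piece i) :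
    useqM P x₀ (n+1) = P.fe (P.pidx (P.f^[n+1] x₀)) (P.c (P.pidx (P.f^[n+1] x₀))) := by
  rw [useqM]; exact if_neg h

lemma formM_mem' {i : ℕ} (h1 : 1 ≤ i) (hN : i < P.N) :
    P.fe i (P.c i) ∈ P.Dminus := ⟨i, h1, hN, rfl⟩

lemma formM_mem {i : ℕ} (h1 : 1 ≤ i) (hN : i ≤ P.N) :
    P.fe i (P.c i) ∈ P.Dminus ∪ ({P.fe P.N (P.c P.N)} : Set ℝ) := by
  rcases lt_or_eq_of_le hN with h | h
  · exact Or.inl (formM_mem' h1 h)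
  · right
    rw [h]
    rfl

lemma formM_mem_D {i : ℕ} (h1 : 1 ≤ i) (hN : i ≤ P.N) :
    P.fe i (P.c i) ∈ P.D := by
  rcases formM_mem h1 hN with h | h
  · exact Or.inl (Or.inl h)
  · exact Or.inr (by rw [Set.mem_singleton_iff.1 h]; exact Set.mem_insert_iff.2 (Or.inr rfl))

lemma exists_dminus (hmono : P.IncrPieces) (hD : P.D ⊆ P.Xt) {x₀ : ℝ} (hx₀ : x₀ ∈ P.Xt)
    (hper : P.IsPeriodic x₀) :
    ∃ d ∈ P.Dminus ∪ ({P.fe P.N (P.c P.N)} : Set ℝ), P.omega d = P.omega x₀ := by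
  classical
  have hlam0 := P.lam_pos
  have hlam1 := P.lam_lt_one
  set u : ℕ → ℝ := useqM P x₀ with hu
  have hx₀' : x₀ ∈ P.X \ P.Δ := by simpa using hx₀ 0
  have hY : ∀ n : ℕ, P.f^[n+1] x₀ ∈ P.X \ P.Δ := fun n => hx₀ (n+1)
  have hpx := pidx_spec hx₀'
  have hpY : ∀ n : ℕ, 1 ≤ P.pidx (P.f^[n+1] x₀) ∧ P.pidx (P.f^[n+1] x₀) ≤ P.N ∧
      P.f^[n+1] x₀ ∈ P.piece (P.pidx (P.f^[n+1] x₀)) := fun n => pidx_spec (hY n)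
  -- main invariant
  have hinv : ∀ n, u n ∈ P.Xt ∧ P.f^[n+1] x₀ ≤ u n := by
    intro n
    induction n with
    | zero =>
      constructor
      · rw [hu, useqM_zero]
        exact hD (formM_mem_D hpx.1 hpx.2.1)
      · rw [hu, useqM_zero]
        have hIcc := piece_subset hpx.1 hpx.2.1 hpx.2.2
        have h1 : P.fe (P.pidx x₀) x₀ ≤ P.fe (P.pidx x₀) (P.c (P.pidx x₀)) :=
          fe_monotoneOn hmono hpx.1 hpx.2.1 hIcc
            ⟨cmono (by omega) hpx.2.1, le_rfl⟩ hIcc.2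
        rw [Function.iterate_one]
        calc P.f x₀ = P.fe (P.pidx x₀) x₀ := (fe_eq_f hpx.1 hpx.2.1 hpx.2.2).symm
          _ ≤ P.fe (P.pidx x₀) (P.c (P.pidx x₀)) := h1
    | succ n ih =>
      obtain ⟨hXt, hle⟩ := ih
      by_cases hcom : ∃ i, 1 ≤ i ∧ i ≤ P.N ∧ u n ∈ P.piece i ∧ P.f^[n+1] x₀ ∈ P.piece i
      · obtain ⟨i, hi1, hiN, hui, hYi⟩ := hcom
        rw [hu, useqM_succ_pos ⟨i, hi1, hiN, by rw [← hu]; exact hui, hYi⟩, ← hu]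
        constructor
        · have := Xt_iterate hXt 1
          simpa using this
        · rw [Function.iterate_succ_apply']
          exact (hmono i hi1 hiN).monotoneOn hYi hui hle
      · rw [hu, useqM_succ_neg (by rw [← hu]; exact hcom)]
        have hp := hpY n
        constructor
        · exact hD (formM_mem_D hp.1 hp.2.1)
        · have hIcc := piece_subset hp.1 hp.2.1 hp.2.2
          have h1 : P.fe (P.pidx (P.f^[n+1] x₀)) (P.f^[n+1] x₀)
              ≤ P.fe (P.pidx (P.f^[n+1] x₀)) (P.c (P.pidx (P.f^[n+1] x₀))) :=
            fe_monotoneOn hmono hp.1 hp.2.1 hIcc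
              ⟨cmono (by omega) hp.2.1, le_rfl⟩ hIcc.2
          calc P.f^[n+1+1] x₀ = P.f (P.f^[n+1] x₀) := Function.iterate_succ_apply' _ _ _
            _ = P.fe (P.pidx (P.f^[n+1] x₀)) (P.f^[n+1] x₀) :=
                (fe_eq_f hp.1 hp.2.1 hp.2.2).symm
            _ ≤ P.fe (P.pidx (P.f^[n+1] x₀)) (P.c (P.pidx (P.f^[n+1] x₀))) := h1
  -- split data at a restart step
  have hsplit : ∀ n, (¬ ∃ i, 1 ≤ i ∧ i ≤ P.N ∧ u n ∈ P.piece i ∧ P.f^[n+1] x₀ ∈ P.piece i) →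
      P.pidx (P.f^[n+1] x₀) < P.N ∧ P.c (P.pidx (P.f^[n+1] x₀)) ≤ u n := by
    intro n hcom
    obtain ⟨hXt, hle⟩ := hinv n
    have hun : u n ∈ P.X \ P.Δ := by simpa using hXt 0
    have hpu := pidx_spec hun
    have hp := hpY n
    have hjle : P.pidx (P.f^[n+1] x₀) ≤ P.pidx (u n) :=
      piece_le_piece hp.1 hp.2.1 hpu.1 hpu.2.1 hp.2.2 hpu.2.2 hle
    have hjne : P.pidx (P.f^[n+1] x₀) ≠ P.pidx (u n) := by
      intro he
      exact hcom ⟨P.pidx (u n), hpu.1, hpu.2.1, hpu.2.2, he ▸ hp.2.2⟩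
    have hjlt : P.pidx (P.f^[n+1] x₀) < P.pidx (u n) := lt_of_le_of_ne hjle hjne
    refine ⟨by omega, ?_⟩
    calc P.c (P.pidx (P.f^[n+1] x₀)) ≤ P.c (P.pidx (u n) - 1) := cmono (by omega) (by omega)
      _ ≤ u n := (piece_subset hpu.1 hpu.2.1 hpu.2.2).1
  -- gap contraction
  have hgap : ∀ n, u (n+1) - P.f^[n+2] x₀ ≤ P.lam * (u n - P.f^[n+1] x₀) := by
    intro n
    obtain ⟨hXt, hle⟩ := hinv n
    by_cases hcom : ∃ i, 1 ≤ i ∧ i ≤ P.N ∧ u n ∈ P.piece i ∧ P.f^[n+1] x₀ ∈ P.piece i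
    · obtain ⟨i, hi1, hiN, hui, hYi⟩ := hcom
      rw [hu, useqM_succ_pos ⟨i, hi1, hiN, by rw [← hu]; exact hui, hYi⟩, ← hu]
      have hlip := P.hfe_lip i hi1 hiN (u n) (piece_subset hi1 hiN hui)
        (P.f^[n+1] x₀) (piece_subset hi1 hiN hYi)
      rw [fe_eq_f hi1 hiN hYi, fe_eq_f hi1 hiN hui] at hlip
      have h1 := le_trans (le_abs_self _) hlip
      rw [abs_of_nonneg (by linarith : (0:ℝ) ≤ u n - P.f^[n+1] x₀)] at h1
      rw [show n + 2 = (n+1) + 1 by omega, Function.iterate_succ_apply']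
      linarith
    · obtain ⟨hi2, hule⟩ := hsplit n hcom
      rw [hu, useqM_succ_neg (by rw [← hu]; exact hcom)]
      have hp := hpY n
      have hIcc := piece_subset hp.1 hp.2.1 hp.2.2
      have hlip := P.hfe_lip (P.pidx (P.f^[n+1] x₀)) hp.1 hp.2.1
        (P.c (P.pidx (P.f^[n+1] x₀))) ⟨cmono (by omega) hp.2.1, le_rfl⟩
        (P.f^[n+1] x₀) hIcc
      have h1 := le_trans (le_abs_self _) hlip
      rw [abs_of_nonneg (by linarith [hIcc.2] :
        (0:ℝ) ≤ P.c (P.pidx (P.f^[n+1] x₀)) - P.f^[n+1] x₀)] at h1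
      have hY2 : P.f^[n+2] x₀ = P.fe (P.pidx (P.f^[n+1] x₀)) (P.f^[n+1] x₀) := by
        rw [fe_eq_f hp.1 hp.2.1 hp.2.2, show n + 2 = (n+1) + 1 by omega]
        exact Function.iterate_succ_apply' _ _ _
      rw [hY2]
      have hlam' : P.lam * (P.c (P.pidx (P.f^[n+1] x₀)) - P.f^[n+1] x₀)
          ≤ P.lam * (u n - P.f^[n+1] x₀) := by
        apply mul_le_mul_of_nonneg_left _ (le_of_lt hlam0)
        linarith
      linarith
  -- gap tends to zero
  have hgap_pow : ∀ n, u n - P.f^[n+1] x₀ ≤ P.lam ^ n * (u 0 - P.f^[1] x₀) := by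
    intro n
    induction n with
    | zero => simp
    | succ n ih =>
      calc u (n+1) - P.f^[n+2] x₀ ≤ P.lam * (u n - P.f^[n+1] x₀) := hgap n
        _ ≤ P.lam * (P.lam ^ n * (u 0 - P.f^[1] x₀)) :=
            mul_le_mul_of_nonneg_left ih (le_of_lt hlam0)
        _ = P.lam ^ (n+1) * (u 0 - P.f^[1] x₀) := by ring
  have htend : Filter.Tendsto (fun n => u n - P.f^[n+1] x₀) Filter.atTop (nhds 0) := by
    apply squeeze_zero (fun n => by linarith [(hinv n).2]) hgap_pow
    have := (tendsto_pow_atTop_nhds_zero_of_lt_one (le_of_lt hlam0) hlam1).mul_const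
      (u 0 - P.f^[1] x₀)
    simpa using this
  -- dichotomy
  by_cases hA : ∃ m, ∀ n, m ≤ n →
      ∃ i, 1 ≤ i ∧ i ≤ P.N ∧ u n ∈ P.piece i ∧ P.f^[n+1] x₀ ∈ P.piece i
  · -- finitely many restarts
    obtain ⟨m, hm⟩ := hA
    set Q : ℕ → Prop := fun k => k = 0 ∨
      ¬ ∃ i, 1 ≤ i ∧ i ≤ P.N ∧ u (k-1) ∈ P.piece i ∧ P.f^[k-1+1] x₀ ∈ P.piece i with hQ
    set m₀ := Nat.findGreatest Q m with hm₀
    have hQm₀ : Q m₀ := Nat.findGreatest_spec (Nat.zero_le m)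
      (show Q 0 by simp [hQ])
    have hnr : ∀ n, m₀ ≤ n →
        ∃ i, 1 ≤ i ∧ i ≤ P.N ∧ u n ∈ P.piece i ∧ P.f^[n+1] x₀ ∈ P.piece i := by
      intro n hn
      by_cases hnm : m ≤ n
      · exact hm n hnm
      · push_neg at hnm
        by_contra hnc
        have hgr := Nat.findGreatest_is_greatest (P := Q) (n := m) (k := n+1)
          (show Nat.findGreatest Q m < n + 1 by omega) (by omega)
        exact hgr (show Q (n+1) by simp only [hQ]; exact Or.inr (by simpa using hnc))
    have horb : ∀ k, u (m₀ + k) = P.f^[k] (u m₀) := by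
      intro k
      induction k with
      | zero => simp
      | succ k ih =>
        have := hnr (m₀ + k) (by omega)
        rw [show m₀ + (k+1) = (m₀ + k) + 1 by omega, hu, useqM_succ_pos (by rw [← hu]; exact this),
          ← hu, ih, Function.iterate_succ_apply']
    have humem : u m₀ ∈ P.Dminus ∪ ({P.fe P.N (P.c P.N)} : Set ℝ) := by
      by_cases h0 : m₀ = 0
      · rw [h0, hu, useqM_zero]
        exact formM_mem hpx.1 hpx.2.1
      · rcases hQm₀ with h | h
        · exact absurd h h0
        · have hm₀1 : m₀ = (m₀ - 1) + 1 := by omega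
          rw [hm₀1, hu, useqM_succ_neg (by rw [← hu]; exact h)]
          exact formM_mem (hpY (m₀ - 1)).1 (hpY (m₀ - 1)).2.1
    refine ⟨u m₀, humem, ?_⟩
    have hdiff : Filter.Tendsto (fun k => P.f^[k] (u m₀) - P.f^[k] (P.f^[m₀+1] x₀))
        Filter.atTop (nhds 0) := by
      have heq : ∀ k, P.f^[k] (u m₀) - P.f^[k] (P.f^[m₀+1] x₀)
          = u (k + m₀) - P.f^[(k + m₀)+1] x₀ := by
        intro k
        have h1 : P.f^[k] (P.f^[m₀+1] x₀) = P.f^[(k + m₀)+1] x₀ := by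
          rw [← Function.iterate_add_apply, show k + (m₀+1) = k + m₀ + 1 by omega]
        have h2 : P.f^[k] (u m₀) = u (k + m₀) := by
          rw [show k + m₀ = m₀ + k by omega, horb]
        rw [h1, h2]
      have hcmp := htend.comp (tendsto_add_atTop_nat m₀)
      exact hcmp.congr fun k => (heq k).symm
    exact (omega_congr hdiff).trans (omega_shift x₀ (m₀+1))
  · -- infinitely many restarts
    have hA' : ∀ m, ∃ n, m ≤ n ∧
        ¬ ∃ i, 1 ≤ i ∧ i ≤ P.N ∧ u n ∈ P.piece i ∧ P.f^[n+1] x₀ ∈ P.piece i := by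
      intro m
      by_contra h
      exact hA ⟨m, fun n hn => by by_contra hc; exact h ⟨n, hn, hc⟩⟩
    by_cases hpig : ∃ is, 1 ≤ is ∧ is < P.N ∧ ∀ m, ∃ n, m ≤ n ∧
        (¬∃ i, 1 ≤ i ∧ i ≤ P.N ∧ u n ∈ P.piece i ∧ P.f^[n+1] x₀ ∈ P.piece i) ∧
        P.pidx (P.f^[n+1] x₀) = is
    · obtain ⟨is, his1, hisN, hinf⟩ := hpig
      have hdD : P.fe is (P.c is) ∈ P.Dminus := formM_mem' his1 hisN
      have hdS : P.fe is (P.c is) ∈ P.orbit x₀ := by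
        by_contra hdS
        obtain ⟨δ, hδ, hdist⟩ := exists_pos_dist (orbit_finite hper) ⟨x₀, 0, rfl⟩ hdS
        obtain ⟨K, hK⟩ := (Metric.tendsto_atTop.1 htend) δ hδ
        obtain ⟨n, hnK, hnc, hni⟩ := hinf K
        have hu1 : u (n+1) = P.fe is (P.c is) := by
          rw [hu, useqM_succ_neg (by rw [← hu]; exact hnc), hni]
        have h1 := hdist _ (⟨n+2, rfl⟩ : P.f^[n+2] x₀ ∈ P.orbit x₀)
        have h2 := hK (n+1) (by omega)
        rw [Real.dist_eq, sub_zero, hu1, show n+1+1 = n+2 by omega] at h2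
        rw [abs_sub_comm] at h1
        linarith
      obtain ⟨t, ht⟩ := hdS
      refine ⟨P.fe is (P.c is), Or.inl hdD, ?_⟩
      rw [← ht]
      exact omega_shift x₀ t
    · exfalso
      have hch : ∀ is, ∃ m, 1 ≤ is → is < P.N → ∀ n, m ≤ n →
          (¬∃ i, 1 ≤ i ∧ i ≤ P.N ∧ u n ∈ P.piece i ∧ P.f^[n+1] x₀ ∈ P.piece i) →
          P.pidx (P.f^[n+1] x₀) ≠ is := by
        intro is
        by_cases h2 : 1 ≤ is
        · by_cases hN : is < P.N
          · by_contra hcon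
            apply hpig
            refine ⟨is, h2, hN, ?_⟩
            intro m
            by_contra hno
            apply hcon
            refine ⟨m, fun _ _ n hn hc he => ?_⟩
            exact hno ⟨n, hn, hc, he⟩
          · exact ⟨0, fun _ hN' => absurd hN' hN⟩
        · exact ⟨0, fun h2' _ => absurd h2' h2⟩
      choose M hM using hch
      obtain ⟨n, hnB, hnc⟩ := hA' (Finset.sup (Finset.range P.N) M)
      obtain ⟨hi2, _⟩ := hsplit n hnc
      have hpn := hpY n
      have hMle : M (P.pidx (P.f^[n+1] x₀)) ≤ Finset.sup (Finset.range P.N) M :=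
        Finset.le_sup (Finset.mem_range.2 hi2)
      exact hM _ hpn.1 hi2 n (le_trans hMle hnB) hnc rfl

end PCIM

/-- If `f` is increasing and injective on each piece, `D ⊆ X̃`, and `x₀ ∈ X̃` is
periodic, then `O(x₀) = ω(d⁻) = ω(d⁺)` for some `d⁻ ∈ D⁻ ∪ {d_N}` and
`d⁺ ∈ D⁺ ∪ {d_0}`. -/
theorem stmt7 (P : PCIM) (hmono : P.IncrPieces) (hinj : P.InjPieces) (hD : P.D ⊆ P.Xt)
    (x₀ : ℝ) (hx₀ : x₀ ∈ P.Xt) (hper : P.IsPeriodic x₀) :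
    ∃ dm ∈ P.Dminus ∪ {P.fe P.N (P.c P.N)}, ∃ dp ∈ P.Dplus ∪ {P.fe 1 (P.c 0)},
      P.orbit x₀ = P.omega dm ∧ P.orbit x₀ = P.omega dp := by
  obtain ⟨dm, hdm, hdm'⟩ := PCIM.exists_dminus hmono hD hx₀ hper
  obtain ⟨dp, hdp, hdp'⟩ := PCIM.exists_dplus hmono hD hx₀ hper
  have horb : P.orbit x₀ = P.omega x₀ := (PCIM.omega_eq_orbit hper).symm
  exact ⟨dm, hdm, dp, hdp, by rw [horb]; exact hdm'.symm, by rw [horb]; exact hdp'.symm⟩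
end

section
/- Let f be a piecewise contracting interval map with D ⊂ X̃, and let x ∈ X̃ with a periodic point p ∈ X̃ of f. If p ∈ ω(x), then ω(x) = O(p), the orbit of p. -/
open Filter Topology Set

open Function

/-!
The periodic orbit `O(p)` lies in `X \ Δ`, where `f` is locally a `λ`-contraction, and it is
finite, so there is one radius `ε > 0` such that `f` contracts by `λ` every ball of radius `ε`
around a point of `O(p)` (intersected with `X \ Δ`). Since `p ∈ ω(x)`, some iterate `fⁿ x`
enters the `ε`-ball around `p`; as the orbit of `x` never meets `Δ`, induction gives
`|f^{n+m} x - f^m p| ≤ λ^m ε`. Hence the orbit of `x` is asymptotic to the periodic sequence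
`m ↦ f^m p`, whose subsequential limits are exactly the points of `O(p)`.
-/

section SubseqLimits

def subseqLimits {α : Type*} [TopologicalSpace α] (u : ℕ → α) : Set α :=
  {y | ∃ φ : ℕ → ℕ, StrictMono φ ∧ Tendsto (u ∘ φ) atTop (𝓝 y)}

theorem finite_range_of_periodic {α : Type*} {v : ℕ → α} {k : ℕ} (hk : 0 < k)
    (hv : Periodic v k) : (range v).Finite :=
  ((finite_Iio k).image v).subset <| by
    rintro _ ⟨m, rfl⟩
    exact ⟨m % k, Nat.mod_lt m hk, hv.map_mod_nat m⟩

theorem dist_iterate_le_pow_mul_of_contracting_along_orbit {α : Type*} [PseudoMetricSpace α]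
    {f : α → α} {S : Set α} {lam ε : ℝ} {x p : α} (hlam₀ : 0 ≤ lam) (hlam₁ : lam ≤ 1)
    (hf : ∀ m, ∀ y ∈ S, dist y (f^[m] p) < ε →
      dist (f y) (f (f^[m] p)) ≤ lam * dist y (f^[m] p))
    (hS : ∀ m, f^[m] x ∈ S) (hxp : dist x p < ε) (m : ℕ) :
    dist (f^[m] x) (f^[m] p) ≤ lam ^ m * dist x p := by
  induction m with
  | zero => simp
  | succ m ih =>
    have hclose : dist (f^[m] x) (f^[m] p) < ε :=
      (ih.trans (mul_le_of_le_one_left dist_nonneg (pow_le_one₀ hlam₀ hlam₁))).trans_lt hxp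
    rw [iterate_succ_apply', iterate_succ_apply', pow_succ', mul_assoc]
    exact (hf m _ (hS m) hclose).trans (mul_le_mul_of_nonneg_left ih hlam₀)

variable {α : Type*} [MetricSpace α] {u v : ℕ → α} {n k : ℕ}

theorem subseqLimits_subset_range_of_periodic (hk : 0 < k) (hv : Periodic v k)
    (h : Tendsto (fun m => dist (u (n + m)) (v m)) atTop (𝓝 0)) :
    subseqLimits u ⊆ range v := by
  rintro y ⟨ψ, hψ, hψy⟩
  have hshift : Tendsto (fun j => ψ j - n) atTop atTop :=
    (tendsto_sub_atTop_nat n).comp hψ.tendsto_atTop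
  have hdist : Tendsto (fun j => dist (u (ψ j)) (v (ψ j - n))) atTop (𝓝 0) := by
    refine (h.comp hshift).congr' ?_
    filter_upwards [eventually_ge_atTop n] with j hj
    simp only [comp_apply, Nat.add_sub_cancel' (hj.trans hψ.le_apply)]
  exact (finite_range_of_periodic hk hv).isClosed.mem_of_tendsto (hψy.congr_dist hdist)
    (Eventually.of_forall fun j => mem_range_self _)

theorem range_subset_subseqLimits_of_periodic (hk : 0 < k) (hv : Periodic v k)
    (h : Tendsto (fun m => dist (u (n + m)) (v m)) atTop (𝓝 0)) :
    range v ⊆ subseqLimits u := by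
  rintro _ ⟨m, rfl⟩
  have hmk : Tendsto (fun j => m + j * k) atTop atTop :=
    tendsto_atTop_mono (fun j => (Nat.le_mul_of_pos_right j hk).trans (Nat.le_add_left _ m))
      tendsto_id
  refine ⟨fun j => n + (m + j * k), strictMono_nat_of_lt_succ fun j => ?_, ?_⟩
  · nlinarith
  · rw [tendsto_iff_dist_tendsto_zero]
    refine (h.comp hmk).congr fun j => ?_
    have hvj : v (m + j * k) = v m := by simpa using hv.nat_mul j m
    simp only [comp_apply, hvj]

theorem subseqLimits_eq_range_of_periodic (hk : 0 < k) (hv : Periodic v k)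
    (h : Tendsto (fun m => dist (u (n + m)) (v m)) atTop (𝓝 0)) :
    subseqLimits u = range v :=
  (subseqLimits_subset_range_of_periodic hk hv h).antisymm
    (range_subset_subseqLimits_of_periodic hk hv h)

end SubseqLimits

namespace PCIM

variable (P : PCIM)

theorem fe_eq_f_of_mem_Icc {i : ℕ} (h1 : 1 ≤ i) (h2 : i ≤ P.N) {y : ℝ}
    (hy : y ∈ P.X \ P.Δ) (hyi : y ∈ Icc (P.c (i - 1)) (P.c i)) :
    P.fe i y = P.f y := by
  rcases eq_or_lt_of_le hyi.1 with hl | hl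
  · obtain rfl : i = 1 := by
      by_contra h
      exact hy.2 ⟨i - 1, by omega, by omega, hl.symm⟩
    rw [← hl]
    exact P.hfe_left
  rcases eq_or_lt_of_le hyi.2 with hr | hr
  · obtain rfl : i = P.N := by
      by_contra h
      exact hy.2 ⟨i, h1, by omega, hr⟩
    rw [hr]
    exact P.hfe_right
  · exact P.hfe_eq i h1 h2 y ⟨hl, hr⟩

theorem exists_piece_of_notMem_Δ {q : ℝ} (hq : q ∉ P.Δ) :
    ∃ i, 1 ≤ i ∧ i ≤ P.N ∧ (i = 1 ∨ P.c (i - 1) < q) ∧ (i = P.N ∨ q < P.c i) := by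
  classical
  have hex : ∃ i, 1 ≤ i ∧ (i = P.N ∨ q < P.c i) := ⟨P.N, by linarith [P.hN], .inl rfl⟩
  refine ⟨Nat.find hex, (Nat.find_spec hex).1, Nat.find_min' hex ⟨by linarith [P.hN], .inl rfl⟩,
    ?_, (Nat.find_spec hex).2⟩
  by_cases hi : Nat.find hex = 1
  · exact .inl hi
  have hprev : 1 ≤ Nat.find hex - 1 := by have := (Nat.find_spec hex).1; omega
  have hmin := Nat.find_min hex (show Nat.find hex - 1 < Nat.find hex by omega)
  simp only [hprev, true_and, not_or, not_lt] at hmin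
  refine .inr (hmin.2.lt_of_ne fun heq => hq ⟨_, hprev, ?_, heq.symm⟩)
  have := Nat.find_min' hex ⟨by linarith [P.hN], .inl rfl⟩
  omega

theorem eventually_mem_Icc_piece {q : ℝ} (hq : q ∉ P.Δ) :
    ∃ i, 1 ≤ i ∧ i ≤ P.N ∧ ∀ᶠ y in 𝓝 q, y ∈ P.X → y ∈ Icc (P.c (i - 1)) (P.c i) := by
  obtain ⟨i, h1, h2, hleft, hright⟩ := P.exists_piece_of_notMem_Δ hq
  refine ⟨i, h1, h2, ?_⟩
  have hlow : ∀ᶠ y in 𝓝 q, y ∈ P.X → P.c (i - 1) ≤ y := by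
    rcases hleft with rfl | hlt
    · exact Eventually.of_forall fun y hy => hy.1
    · filter_upwards [Ioi_mem_nhds hlt] with y hy _ using le_of_lt hy
  have hup : ∀ᶠ y in 𝓝 q, y ∈ P.X → y ≤ P.c i := by
    rcases hright with rfl | hlt
    · exact Eventually.of_forall fun y hy => hy.2
    · filter_upwards [Iio_mem_nhds hlt] with y hy _ using le_of_lt hy
  filter_upwards [hlow, hup] with y hl hu hy using ⟨hl hy, hu hy⟩

theorem eventually_dist_f_le {q : ℝ} (hq : q ∈ P.X \ P.Δ) :
    ∀ᶠ y in 𝓝 q, y ∈ P.X \ P.Δ → dist (P.f y) (P.f q) ≤ P.lam * dist y q := by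
  obtain ⟨i, h1, h2, hpiece⟩ := P.eventually_mem_Icc_piece hq.2
  have hqi : q ∈ Icc (P.c (i - 1)) (P.c i) := hpiece.self_of_nhds hq.1
  filter_upwards [hpiece] with y hyi hy
  rw [Real.dist_eq, Real.dist_eq, ← P.fe_eq_f_of_mem_Icc h1 h2 hy (hyi hy.1), ← P.fe_eq_f_of_mem_Icc h1 h2 hq hqi]
  exact P.hfe_lip i h1 h2 y (hyi hy.1) q hqi

theorem exists_radius_contracting_along_periodic_orbit {p : ℝ} (hp : p ∈ P.Xt) {k : ℕ}
    (hk : 0 < k) (hper : Periodic (fun m => P.f^[m] p) k) :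
    ∃ ε > 0, ∀ m, ∀ y ∈ P.X \ P.Δ, dist y (P.f^[m] p) < ε →
      dist (P.f y) (P.f (P.f^[m] p)) ≤ P.lam * dist y (P.f^[m] p) := by
  choose E hEpos hE using fun m => Metric.eventually_nhds_iff.1 (P.eventually_dist_f_le (hp m))
  have hne : (Finset.range k).Nonempty := Finset.nonempty_range_iff.2 hk.ne'
  refine ⟨(Finset.range k).inf' hne E, (Finset.lt_inf'_iff hne).2 fun i _ => hEpos i,
    fun m y hy hdist => ?_⟩
  rw [← hper.map_mod_nat m] at hdist ⊢
  exact hE _ (hdist.trans_le (Finset.inf'_le E (Finset.mem_range.2 (Nat.mod_lt m hk)))) hy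

end PCIM

theorem stmt12_general (P : PCIM) (x : ℝ) (hx : x ∈ P.Xt)
    (p : ℝ) (hp : p ∈ P.Xt) (hper : P.IsPeriodic p) (hpω : p ∈ P.omega x) :
    P.omega x = P.orbit p := by
  obtain ⟨k, hk, hkp⟩ := hper
  have hperiodic : Periodic (fun m => P.f^[m] p) k := fun m => by
    simp only [iterate_add_apply, hkp]
  obtain ⟨ε, hε, hcontr⟩ := P.exists_radius_contracting_along_periodic_orbit hp hk hperiodic
  obtain ⟨n, hn⟩ : ∃ n, dist (P.f^[n] x) p < ε := by
    obtain ⟨φ, -, hφ⟩ := hpω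
    obtain ⟨j, hj⟩ := (hφ.eventually (Metric.ball_mem_nhds p hε)).exists
    exact ⟨φ j, hj⟩
  have hshadow : Tendsto (fun m => dist (P.f^[n + m] x) (P.f^[m] p)) atTop (𝓝 0) := by
    have hpow : Tendsto (fun m => P.lam ^ m * dist (P.f^[n] x) p) atTop (𝓝 0) := by
      simpa using (tendsto_pow_atTop_nhds_zero_of_lt_one P.hlam.1.le P.hlam.2).mul_const
        (dist (P.f^[n] x) p)
    refine squeeze_zero (fun _ => dist_nonneg) (fun m => ?_) hpow
    rw [add_comm, iterate_add_apply]
    exact dist_iterate_le_pow_mul_of_contracting_along_orbit P.hlam.1.le P.hlam.2.le hcontr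
      (fun m => iterate_add_apply P.f m n x ▸ hx (m + n)) hn m
  exact subseqLimits_eq_range_of_periodic (u := fun m => P.f^[m] x) hk hperiodic hshadow

/-- If `D ⊆ X̃`, `x ∈ X̃`, `p ∈ X̃` is a periodic point and `p ∈ ω(x)`, then
`ω(x) = O(p)`. -/
theorem stmt12 (P : PCIM) (hD : P.D ⊆ P.Xt) (x : ℝ) (hx : x ∈ P.Xt)
    (p : ℝ) (hp : p ∈ P.Xt) (hper : P.IsPeriodic p) (hpω : p ∈ P.omega x) :
    P.omega x = P.orbit p :=
  stmt12_general P x hx p hp hper hpω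
end
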